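/- arXiv:2604.06738 — 2 statements merged into one kernel-verified Lean document; each statement's English description precedes it below -/
import Mathlib

section
/- Let z, z' be vectors in R^A (A a finite nonempty set), and let P = Softmax(z), Q = Softmax(z') be the probability distributions with P(a) = exp(z_a)/Σ_{a'} exp(z_{a'}) and similarly for Q. Then the KL divergence satisfies KL(P‖Q) ≤ (1/2)·‖z − z'‖_∞². -/
open Real Finset

noncomputable def softmax {A : Type*} [Fintype A] (z : A → ℝ) : A → ℝ :=
  fun a => Real.exp (z a) / ∑ a', Real.exp (z a')

noncomputable def klDiv {A : Type*} [Fintype A] (P Q : A → ℝ) : ℝ :=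
  ∑ a, P a * Real.log (P a / Q a)

/-!
With `P = softmax z` and `X = z' - z` we have `softmax z' ∝ P · exp X`, so `KL(P‖softmax z')` is
`log E_P[exp (X - E_P X)]`, the cumulant generating function at `1` of the centred variable `X`.
Since `|X| ≤ ‖z - z'‖∞`, Hoeffding's lemma (applied to `P`, realised as the counting measure
tilted by `z`) bounds it by `(2‖z - z'‖∞)² / 8`.
-/

open MeasureTheory ProbabilityTheory

section Softmax

variable {A : Type*} [Fintype A] [Nonempty A]

lemma sum_exp_pos (z : A → ℝ) : 0 < ∑ a, exp (z a) :=
  sum_pos (fun a _ => exp_pos (z a)) univ_nonempty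

lemma softmax_pos (z : A → ℝ) (a : A) : 0 < softmax z a :=
  div_pos (exp_pos (z a)) (sum_exp_pos z)

lemma sum_softmax (z : A → ℝ) : ∑ a, softmax z a = 1 := by
  simp only [softmax, ← sum_div, div_self (sum_exp_pos z).ne']

lemma log_softmax (z : A → ℝ) (a : A) :
    log (softmax z a) = z a - log (∑ b, exp (z b)) := by
  rw [softmax, log_div (exp_pos _).ne' (sum_exp_pos z).ne', log_exp]

lemma klDiv_softmax (z z' : A → ℝ) :
    klDiv (softmax z) (softmax z') =
      ∑ a, softmax z a * (z a - z' a) + log (∑ a, exp (z' a)) - log (∑ a, exp (z a)) := by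
  have hterm (a : A) : log (softmax z a / softmax z' a) =
      (z a - z' a) + (log (∑ b, exp (z' b)) - log (∑ b, exp (z b))) := by
    rw [log_div (softmax_pos z a).ne' (softmax_pos z' a).ne', log_softmax, log_softmax]
    ring
  simp only [klDiv, hterm, mul_add, sum_add_distrib, ← sum_mul, sum_softmax, one_mul]
  ring

lemma log_sum_softmax_mul_exp (z x : A → ℝ) :
    log (∑ a, softmax z a * exp (x a)) = log (∑ a, exp (z a + x a)) - log (∑ a, exp (z a)) := by
  simp only [softmax, div_mul_eq_mul_div, ← sum_div, ← exp_add]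
  exact log_div (sum_exp_pos _).ne' (sum_exp_pos z).ne'

lemma klDiv_softmax_eq_log_sum_softmax_mul_exp (z z' : A → ℝ) :
    klDiv (softmax z) (softmax z') =
      log (∑ a, softmax z a * exp (z' a - z a - ∑ b, softmax z b * (z' b - z b))) := by
  set m := ∑ b, softmax z b * (z' b - z b)
  have hshift : ∑ a, exp (z a + (z' a - z a - m)) = (∑ a, exp (z' a)) * exp (-m) := by
    rw [sum_mul]
    exact sum_congr rfl fun a _ => by rw [← exp_add]; ring_nf
  rw [log_sum_softmax_mul_exp, hshift, log_mul (sum_exp_pos z').ne' (exp_pos _).ne', log_exp,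
    klDiv_softmax]
  simp only [m, ← sum_neg_distrib, ← mul_neg, neg_sub]
  ring

end Softmax

section Gibbs

variable {A : Type*} [Fintype A] [MeasurableSpace A] [MeasurableSingletonClass A]

lemma integral_tilted_count (z g : A → ℝ) :
    ∫ a, g a ∂(Measure.count.tilted z) = ∑ a, softmax z a * g a := by
  simp [integral_tilted, softmax]

lemma isProbabilityMeasure_tilted_count [Nonempty A] (z : A → ℝ) :
    IsProbabilityMeasure (Measure.count.tilted z) :=
  isProbabilityMeasure_tilted (.of_finite)

end Gibbs

lemma log_sum_softmax_mul_exp_sub_mean_le {A : Type*} [Fintype A] [Nonempty A]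
    (z x : A → ℝ) {ε : ℝ} (hx : ∀ a, |x a| ≤ ε) :
    log (∑ a, softmax z a * exp (x a - ∑ b, softmax z b * x b)) ≤ ε ^ 2 / 2 := by
  let _ : MeasurableSpace A := ⊤
  have := isProbabilityMeasure_tilted_count z
  have hX := hasSubgaussianMGF_of_mem_Icc (μ := Measure.count.tilted z)
    Measurable.of_discrete.aemeasurable (ae_of_all _ fun a => abs_le.1 (hx a))
  have hcgf := hX.cgf_le 1
  rw [cgf, mgf, integral_tilted_count, integral_tilted_count] at hcgf
  convert hcgf using 1
  · simp
  · simp [← two_mul, sq_abs]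

theorem kl_softmax_le_half_sq_linf {A : Type*} [Fintype A] [Nonempty A]
    (z z' : A → ℝ) :
    klDiv (softmax z) (softmax z') ≤ (1 / 2) * ‖z - z'‖ ^ 2 := by
  have hbound (a : A) : |z' a - z a| ≤ ‖z - z'‖ := by
    rw [abs_sub_comm]
    exact norm_le_pi_norm (z - z') a
  calc klDiv (softmax z) (softmax z')
      = log (∑ a, softmax z a * exp (z' a - z a - ∑ b, softmax z b * (z' b - z b))) :=
        klDiv_softmax_eq_log_sum_softmax_mul_exp z z'
    _ ≤ ‖z - z'‖ ^ 2 / 2 := log_sum_softmax_mul_exp_sub_mean_le z (z' - z) hbound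
    _ = (1 / 2) * ‖z - z'‖ ^ 2 := by ring
end

section
/- Combining the softmax-KL smoothness with the logit bound: let g : A × A → [−1,1], η > 0, c ∈ R^A, and let π₂, π₂' be probability distributions on A. Define P = Softmax(z) and Q = Softmax(z') with z_a = η·E_{a₂∼π₂}[g(a,a₂)] + c_a and z'_a = η·E_{a₂∼π₂'}[g(a,a₂)] + c_a. Then KL(P‖Q) ≤ (η²/2)·‖π₂ − π₂'‖₁². -/
open Real Finset
open Set Filter

open Real Finset Set Filter

lemma chord_exp {t h : ℝ} (hh : 0 < h) (ht : |t| ≤ h) :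
    Real.exp (-t) ≤ Real.cosh h - t * (Real.sinh h / h) := by
  obtain ⟨ht1, ht2⟩ := abs_le.1 ht
  have ha : (0:ℝ) ≤ (h - t) / (2 * h) := div_nonneg (by linarith) (by positivity)
  have hb : (0:ℝ) ≤ (h + t) / (2 * h) := div_nonneg (by linarith) (by positivity)
  have hab : (h - t) / (2 * h) + (h + t) / (2 * h) = 1 := by
    rw [← add_div, show h - t + (h + t) = 2 * h by ring, div_self (by positivity)]
  have key := convexOn_exp.2 (Set.mem_univ h) (Set.mem_univ (-h)) ha hb hab
  simp only [smul_eq_mul] at key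
  have e1 : (h - t) / (2 * h) * h + (h + t) / (2 * h) * (-h) = -t := by
    field_simp; ring
  rw [e1] at key
  calc Real.exp (-t) ≤ (h - t) / (2 * h) * Real.exp h + (h + t) / (2 * h) * Real.exp (-h) := key
    _ = Real.cosh h - t * (Real.sinh h / h) := by
        rw [Real.cosh_eq, Real.sinh_eq]
        field_simp
        ring

lemma psi_le_sq {h : ℝ} (hh : 0 < h) :
    Real.log (Real.sinh h / h) + h * Real.cosh h / Real.sinh h - 1 ≤ h ^ 2 / 2 := by
  set φ : ℝ → ℝ := fun x => x ^ 2 / 2 + 1 - x * Real.cosh x / Real.sinh x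
    - Real.log (Real.sinh x) + Real.log x with hφ
  have hderiv : ∀ x ∈ Set.Ioi (0:ℝ), HasDerivAt φ
      ((x * Real.cosh x - Real.sinh x) ^ 2 / (x * Real.sinh x ^ 2)) x := by
    intro x hx
    have hx0 : (0:ℝ) < x := hx
    have hs : Real.sinh x ≠ 0 := ne_of_gt (Real.sinh_pos_iff.2 hx0)
    have d1 : HasDerivAt (fun y : ℝ => y ^ 2 / 2 + 1) x x := by
      have := ((hasDerivAt_pow 2 x).div_const 2).add_const 1
      simpa using this
    have d2 : HasDerivAt (fun y : ℝ => y * Real.cosh y)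
        (1 * Real.cosh x + x * Real.sinh x) x :=
      (hasDerivAt_id x).mul (Real.hasDerivAt_cosh x)
    have d3 : HasDerivAt (fun y : ℝ => y * Real.cosh y / Real.sinh y)
        (((1 * Real.cosh x + x * Real.sinh x) * Real.sinh x
          - x * Real.cosh x * Real.cosh x) / Real.sinh x ^ 2) x :=
      d2.div (Real.hasDerivAt_sinh x) hs
    have d4 : HasDerivAt (fun y : ℝ => Real.log (Real.sinh y))
        (Real.cosh x / Real.sinh x) x := by
      simpa using (Real.hasDerivAt_sinh x).log hs
    have d5 : HasDerivAt Real.log x⁻¹ x := Real.hasDerivAt_log (ne_of_gt hx0)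
    have := ((d1.sub d3).sub d4).add d5
    refine this.congr_deriv ?_
    field_simp
    ring
  have hmono : MonotoneOn φ (Set.Ioi (0:ℝ)) := by
    apply monotoneOn_of_deriv_nonneg (convex_Ioi 0)
    · exact fun x hx => (hderiv x hx).continuousAt.continuousWithinAt
    · intro x hx
      rw [interior_Ioi] at hx
      exact (hderiv x hx).differentiableAt.differentiableWithinAt
    · intro x hx
      rw [interior_Ioi] at hx
      rw [(hderiv x hx).deriv]
      have hx0 : (0:ℝ) < x := hx
      have : (0:ℝ) < Real.sinh x := Real.sinh_pos_iff.2 hx0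
      positivity
  have hslope : Tendsto (fun x : ℝ => Real.sinh x / x) (nhdsWithin 0 (Set.Ioi 0)) (nhds 1) := by
    have h1 : Tendsto (slope Real.sinh 0) (nhdsWithin 0 {0}ᶜ) (nhds (Real.cosh 0)) :=
      hasDerivAt_iff_tendsto_slope.1 (Real.hasDerivAt_sinh 0)
    have h2 : Tendsto (slope Real.sinh 0) (nhdsWithin 0 (Set.Ioi 0)) (nhds (Real.cosh 0)) :=
      h1.mono_left (nhdsWithin_mono 0 (fun x hx => ne_of_gt hx))
    rw [Real.cosh_zero] at h2
    refine h2.congr (fun x => ?_)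
    simp [slope_def_field, div_eq_div_iff]
  have hlim : Tendsto φ (nhdsWithin 0 (Set.Ioi 0)) (nhds 0) := by
    have hc : Tendsto (fun x : ℝ => Real.cosh x) (nhdsWithin 0 (Set.Ioi 0)) (nhds 1) := by
      have := (Real.continuous_cosh.tendsto 0).mono_left
        (nhdsWithin_le_nhds (s := Set.Ioi (0:ℝ)))
      simpa using this
    have hratio : Tendsto (fun x : ℝ => Real.cosh x / (Real.sinh x / x))
        (nhdsWithin 0 (Set.Ioi 0)) (nhds 1) := by
      have := hc.div hslope one_ne_zero
      simpa [Pi.div_def] using this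
    have hlog : Tendsto (fun x : ℝ => Real.log (Real.sinh x / x))
        (nhdsWithin 0 (Set.Ioi 0)) (nhds 0) := by
      have := (Real.continuousAt_log one_ne_zero).tendsto.comp hslope
      simpa [Function.comp_def] using this
    have hsq : Tendsto (fun x : ℝ => x ^ 2 / 2 + 1) (nhdsWithin 0 (Set.Ioi 0)) (nhds 1) := by
      have hcont : Continuous (fun x : ℝ => x ^ 2 / 2 + 1) := by continuity
      have := (hcont.tendsto 0).mono_left (nhdsWithin_le_nhds (s := Set.Ioi (0:ℝ)))
      simpa using this
    have main : Tendsto (fun x : ℝ => x ^ 2 / 2 + 1 - Real.cosh x / (Real.sinh x / x)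
        - Real.log (Real.sinh x / x)) (nhdsWithin 0 (Set.Ioi 0)) (nhds 0) := by
      have := (hsq.sub hratio).sub hlog
      simpa using this
    refine main.congr' ?_
    filter_upwards [self_mem_nhdsWithin] with x hx
    have hx0 : (0:ℝ) < x := hx
    have hs : Real.sinh x ≠ 0 := ne_of_gt (Real.sinh_pos_iff.2 hx0)
    rw [hφ]
    rw [Real.log_div hs (ne_of_gt hx0)]
    have : Real.cosh x / (Real.sinh x / x) = x * Real.cosh x / Real.sinh x := by
      field_simp
    rw [this]
    ring
  have hφh : 0 ≤ φ h := by
    refine le_of_tendsto hlim ?_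
    filter_upwards [self_mem_nhdsWithin,
      Ioo_mem_nhdsGT_of_mem (Set.left_mem_Ico.2 hh)] with x hx hxh
    exact hmono hx hh (le_of_lt hxh.2)
  have hs : Real.sinh h ≠ 0 := ne_of_gt (Real.sinh_pos_iff.2 hh)
  rw [hφ] at hφh
  simp only at hφh
  rw [Real.log_div hs (ne_of_gt hh)]
  linarith


/-- Combining softmax-KL smoothness with the logit bound: the KL divergence between
the softmax best responses against two opponent policies is bounded by
`(η²/2)·‖π₂ − π₂'‖₁²`. -/
theorem kl_softmax_le_eta_sq_l1_sq {A : Type*} [Fintype A] [Nonempty A]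
    (g : A → A → ℝ) (hg : ∀ a a₂, -1 ≤ g a a₂ ∧ g a a₂ ≤ 1)
    (η : ℝ) (hη : 0 < η) (c : A → ℝ)
    (π₂ π₂' : A → ℝ)
    (hπ₂ : ∀ a, 0 ≤ π₂ a) (hπ₂sum : ∑ a, π₂ a = 1)
    (hπ₂' : ∀ a, 0 ≤ π₂' a) (hπ₂'sum : ∑ a, π₂' a = 1)
    (z z' : A → ℝ)
    (hz : ∀ a, z a = η * (∑ a₂, π₂ a₂ * g a a₂) + c a)
    (hz' : ∀ a, z' a = η * (∑ a₂, π₂' a₂ * g a a₂) + c a) :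
    klDiv (softmax z) (softmax z') ≤ (η ^ 2 / 2) * (∑ a₂, |π₂ a₂ - π₂' a₂|) ^ 2 := by
  classical
  set Δ : ℝ := ∑ a₂, |π₂ a₂ - π₂' a₂| with hΔdef
  have hΔnn : 0 ≤ Δ := Finset.sum_nonneg fun _ _ => abs_nonneg _
  have hδ : ∀ a, |z a - z' a| ≤ η * Δ := by
    intro a
    have e : z a - z' a = η * ∑ a₂, (π₂ a₂ - π₂' a₂) * g a a₂ := by
      rw [hz a, hz' a]
      simp only [Finset.mul_sum]
      rw [add_sub_add_right_eq_sub, ← Finset.sum_sub_distrib]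
      apply Finset.sum_congr rfl; intro a₂ _; ring
    rw [e, abs_mul, abs_of_pos hη]
    apply mul_le_mul_of_nonneg_left _ (le_of_lt hη)
    calc |∑ a₂, (π₂ a₂ - π₂' a₂) * g a a₂| ≤ ∑ a₂, |(π₂ a₂ - π₂' a₂) * g a a₂| :=
          Finset.abs_sum_le_sum_abs _ _
      _ ≤ Δ := by
          rw [hΔdef]
          apply Finset.sum_le_sum
          intro a₂ _
          rw [abs_mul]
          have hg1 : |g a a₂| ≤ 1 := abs_le.2 (hg a a₂)
          calc |π₂ a₂ - π₂' a₂| * |g a a₂| ≤ |π₂ a₂ - π₂' a₂| * 1 :=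
                mul_le_mul_of_nonneg_left hg1 (abs_nonneg _)
            _ = _ := mul_one _
  rcases eq_or_lt_of_le hΔnn with hΔ0 | hΔpos
  · -- Δ = 0 : the two distributions coincide
    have hzz : z = z' := by
      funext a
      have := hδ a
      rw [← hΔ0, mul_zero] at this
      have := abs_nonpos_iff.1 this
      linarith [sub_eq_zero.1 this]
    rw [hzz]
    have hZ' : (0:ℝ) < ∑ a, Real.exp (z' a) :=
      Finset.sum_pos (fun a _ => Real.exp_pos _) Finset.univ_nonempty
    have : klDiv (softmax z') (softmax z') = 0 := by
      unfold klDiv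
      apply Finset.sum_eq_zero
      intro a _
      have hP : softmax z' a ≠ 0 := by
        unfold softmax
        exact ne_of_gt (div_pos (Real.exp_pos _) hZ')
      rw [div_self hP, Real.log_one, mul_zero]
    rw [this]
    positivity
  · -- main case
    have hh : 0 < η * Δ := mul_pos hη hΔpos
    set h : ℝ := η * Δ with hhdef
    set Z : ℝ := ∑ a, Real.exp (z a) with hZdef
    set Z' : ℝ := ∑ a, Real.exp (z' a) with hZ'def
    have hZ : 0 < Z := Finset.sum_pos (fun a _ => Real.exp_pos _) Finset.univ_nonempty
    have hZ' : 0 < Z' := Finset.sum_pos (fun a _ => Real.exp_pos _) Finset.univ_nonempty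
    set s : ℝ := Real.sinh h / h with hsdef
    have hs : 0 < s := div_pos (Real.sinh_pos_iff.2 hh) hh
    set μ : ℝ := ∑ a, softmax z a * (z a - z' a) with hμdef
    have hPsum : ∑ a, softmax z a = 1 := by
      unfold softmax
      rw [← Finset.sum_div, ← hZdef, div_self (ne_of_gt hZ)]
    have hKL : klDiv (softmax z) (softmax z') = μ + (Real.log Z' - Real.log Z) := by
      unfold klDiv
      have hlog : ∀ a, Real.log (softmax z a / softmax z' a)
          = (z a - z' a) + (Real.log Z' - Real.log Z) := by
        intro a
        unfold softmax
        rw [← hZdef, ← hZ'def,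
          Real.log_div (ne_of_gt (div_pos (Real.exp_pos _) hZ))
            (ne_of_gt (div_pos (Real.exp_pos _) hZ')),
          Real.log_div (Real.exp_ne_zero _) (ne_of_gt hZ),
          Real.log_div (Real.exp_ne_zero _) (ne_of_gt hZ'),
          Real.log_exp, Real.log_exp]
        ring
      calc ∑ a, softmax z a * Real.log (softmax z a / softmax z' a)
          = ∑ a, (softmax z a * (z a - z' a)
              + softmax z a * (Real.log Z' - Real.log Z)) := by
            apply Finset.sum_congr rfl
            intro a _
            rw [hlog a]; ring
        _ = μ + (Real.log Z' - Real.log Z) := by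
            rw [Finset.sum_add_distrib, ← Finset.sum_mul, hPsum, one_mul, hμdef]
    have hμZ : ∑ a, Real.exp (z a) * (z a - z' a) = Z * μ := by
      rw [hμdef, Finset.mul_sum]
      apply Finset.sum_congr rfl
      intro a _
      unfold softmax
      rw [← hZdef]
      field_simp
    have hZ'le : Z' ≤ Z * (Real.cosh h - μ * s) := by
      have step1 : Z' = ∑ a, Real.exp (z a) * Real.exp (-(z a - z' a)) := by
        rw [hZ'def]
        apply Finset.sum_congr rfl
        intro a _
        rw [← Real.exp_add]
        ring_nf
      have step2 : ∀ a ∈ Finset.univ (α := A),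
          Real.exp (z a) * Real.exp (-(z a - z' a))
            ≤ Real.exp (z a) * (Real.cosh h - (z a - z' a) * s) := fun a _ =>
        mul_le_mul_of_nonneg_left (chord_exp hh (hδ a)) (le_of_lt (Real.exp_pos _))
      calc Z' = ∑ a, Real.exp (z a) * Real.exp (-(z a - z' a)) := step1
        _ ≤ ∑ a, Real.exp (z a) * (Real.cosh h - (z a - z' a) * s) :=
            Finset.sum_le_sum step2
        _ = Z * Real.cosh h - (∑ a, Real.exp (z a) * (z a - z' a)) * s := by
            rw [hZdef, Finset.sum_mul, Finset.sum_mul, ← Finset.sum_sub_distrib]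
            apply Finset.sum_congr rfl
            intro a _
            ring
        _ = Z * (Real.cosh h - μ * s) := by rw [hμZ]; ring
    have hX : 0 < Real.cosh h - μ * s := by
      nlinarith [hZ, hZ', hZ'le]
    have hlogle : Real.log Z' - Real.log Z ≤ Real.log (Real.cosh h - μ * s) := by
      have h1 : Real.log Z' ≤ Real.log (Z * (Real.cosh h - μ * s)) :=
        Real.log_le_log hZ' hZ'le
      rw [Real.log_mul (ne_of_gt hZ) (ne_of_gt hX)] at h1
      linarith
    have hfinal : μ + Real.log (Real.cosh h - μ * s) ≤ h ^ 2 / 2 := by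
      have h1 : Real.log (Real.cosh h - μ * s) - Real.log s
          ≤ (Real.cosh h - μ * s) / s - 1 := by
        rw [← Real.log_div (ne_of_gt hX) (ne_of_gt hs)]
        exact Real.log_le_sub_one_of_pos (div_pos hX hs)
      have h2 : (Real.cosh h - μ * s) / s = Real.cosh h / s - μ := by
        field_simp
      have h3 : Real.cosh h / s = h * Real.cosh h / Real.sinh h := by
        rw [hsdef, div_div_eq_mul_div]
        ring
      have h4 := psi_le_sq hh
      rw [← hsdef] at h4
      linarith
    have hrhs : h ^ 2 / 2 = η ^ 2 / 2 * Δ ^ 2 := by rw [hhdef]; ring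
    rw [hKL]
    calc μ + (Real.log Z' - Real.log Z) ≤ μ + Real.log (Real.cosh h - μ * s) := by linarith
      _ ≤ h ^ 2 / 2 := hfinal
      _ = η ^ 2 / 2 * Δ ^ 2 := hrhs
end
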